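/- Let Φ be an irreducible root system with highest root β̃ and define F(Φ) := min{⟨β̃, α⟩ : α ∈ Φ, ⟨β̃, α⟩ > 0}. Then F(Φ) = 2 if Φ is of type A₁ or C_m (m ≥ 2), and F(Φ) = 1 otherwise. -/

import Mathlib

open scoped RealInnerProductSpace

noncomputable section

/-- The Cartan pairing `⟨α, β⟩ = 2 (α, β) / (β, β)`. -/
def cpair {V : Type*} [NormedAddCommGroup V] [InnerProductSpace ℝ V] (α β : V) : ℝ :=
  2 * ⟪α, β⟫ / ⟪β, β⟫

/-- `F(Φ) = min{⟨β̃, α⟩ : α ∈ Φ, ⟨β̃, α⟩ > 0}`. -/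
def Fval {V : Type*} [NormedAddCommGroup V] [InnerProductSpace ℝ V]
    (Φ : Set V) (βt : V) : ℝ :=
  sInf {x : ℝ | 0 < x ∧ ∃ α ∈ Φ, cpair βt α = x}

/-- The standard basis vector `e i` of `ℝ^k`. -/
def e {k : ℕ} (i : Fin k) : EuclideanSpace ℝ (Fin k) := EuclideanSpace.single i 1

/-- A sign, i.e. an element of `{1, -1} ⊆ ℝ`. -/
def IsSign (ε : ℝ) : Prop := ε = 1 ∨ ε = -1

/-- Type `A_m`: `{e i - e j : i ≠ j}` in `ℝ^{m+1}`. -/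
def AmRoots (m : ℕ) : Set (EuclideanSpace ℝ (Fin (m + 1))) :=
  {v | ∃ i j, i ≠ j ∧ v = e i - e j}

/-- Type `B_m`: `{± e i ± e j : i < j} ∪ {± e i}` in `ℝ^m`. -/
def BmRoots (m : ℕ) : Set (EuclideanSpace ℝ (Fin m)) :=
  {v | (∃ i j, ∃ ε ε' : ℝ, i < j ∧ IsSign ε ∧ IsSign ε' ∧ v = ε • e i + ε' • e j) ∨
       (∃ i, ∃ ε : ℝ, IsSign ε ∧ v = ε • e i)}

/-- Type `C_m`: `{± e i ± e j : i < j} ∪ {± 2 e i}` in `ℝ^m`. -/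
def CmRoots (m : ℕ) : Set (EuclideanSpace ℝ (Fin m)) :=
  {v | (∃ i j, ∃ ε ε' : ℝ, i < j ∧ IsSign ε ∧ IsSign ε' ∧ v = ε • e i + ε' • e j) ∨
       (∃ i, ∃ ε : ℝ, IsSign ε ∧ v = (2 * ε) • e i)}

/-- Type `D_m`: `{± e i ± e j : i < j}` in `ℝ^m`. -/
def DmRoots (m : ℕ) : Set (EuclideanSpace ℝ (Fin m)) :=
  {v | ∃ i j, ∃ ε ε' : ℝ, i < j ∧ IsSign ε ∧ IsSign ε' ∧ v = ε • e i + ε' • e j}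

/-- Type `G₂`, realized in the plane `x + y + z = 0` of `ℝ³`:
short roots `e i - e j`, long roots `± (3 e i - (e 0 + e 1 + e 2))`. -/
def G2Roots : Set (EuclideanSpace ℝ (Fin 3)) :=
  {v | (∃ i j, i ≠ j ∧ v = e i - e j) ∨
       (∃ i, ∃ ε : ℝ, IsSign ε ∧ v = ε • ((3 : ℝ) • e i - (e 0 + e 1 + e 2)))}

/-- Type `F₄` in `ℝ⁴`: `{± e i}`, `{± e i ± e j}`, and `½(± e 0 ± e 1 ± e 2 ± e 3)`. -/
def F4Roots : Set (EuclideanSpace ℝ (Fin 4)) :=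
  {v | (∃ i, ∃ ε : ℝ, IsSign ε ∧ v = ε • e i) ∨
       (∃ i j, ∃ ε ε' : ℝ, i < j ∧ IsSign ε ∧ IsSign ε' ∧ v = ε • e i + ε' • e j) ∨
       (∀ i, v i = 1 / 2 ∨ v i = -(1 / 2))}

/-- Type `E₈` in `ℝ⁸`: `{± e i ± e j : i < j}` together with the vectors all of whose
coordinates are `± ½` with an even number of minus signs. -/
def E8Roots : Set (EuclideanSpace ℝ (Fin 8)) :=
  {v | (∃ i j, ∃ ε ε' : ℝ, i < j ∧ IsSign ε ∧ IsSign ε' ∧ v = ε • e i + ε' • e j) ∨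
       ((∀ i, v i = 1 / 2 ∨ v i = -(1 / 2)) ∧ Even (Set.ncard {i | v i = -(1 / 2)}))}

/-- Type `E₇`, realized as the roots of `E₈` orthogonal to the root `e 6 + e 7`. -/
def E7Roots : Set (EuclideanSpace ℝ (Fin 8)) :=
  {v ∈ E8Roots | ⟪v, e 6 + e 7⟫ = 0}

/-- Type `E₆`, realized as the roots of `E₈` orthogonal to the `A₂`-pair
`e 6 + e 7`, `e 5 + e 6`. -/
def E6Roots : Set (EuclideanSpace ℝ (Fin 8)) :=
  {v ∈ E8Roots | ⟪v, e 6 + e 7⟫ = 0 ∧ ⟪v, e 5 + e 6⟫ = 0}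

lemma inner_ee {k} (i j : Fin k) : ⟪(e i : EuclideanSpace ℝ (Fin k)), e j⟫ = if i = j then 1 else 0 := by
  simp [e, EuclideanSpace.inner_single_left, EuclideanSpace.single_apply, eq_comm]

lemma inner_e_left {k} (i : Fin k) (v : EuclideanSpace ℝ (Fin k)) : ⟪(e i), v⟫ = v i := by
  simp [e, EuclideanSpace.inner_single_left]

lemma inner_e_right {k} (i : Fin k) (v : EuclideanSpace ℝ (Fin k)) : ⟪v, e i⟫ = v i := by
  rw [real_inner_comm, inner_e_left]

lemma e_apply {k} (i x : Fin k) : (e i : EuclideanSpace ℝ (Fin k)) x = if i = x then 1 else 0 := by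
  simp [e, EuclideanSpace.single_apply, eq_comm]

lemma cpair_pp {k} {i j : Fin k} (hij : i ≠ j) {ε ε' : ℝ} (h1 : ε*ε = 1) (h2 : ε'*ε' = 1)
    (v : EuclideanSpace ℝ (Fin k)) :
    cpair v (ε • e i + ε' • e j) = ε * v i + ε' * v j := by
  have hden : ⟪(ε • e i + ε' • e j : EuclideanSpace ℝ (Fin k)), ε • e i + ε' • e j⟫ = 2 := by
    simp only [inner_add_left, inner_add_right, real_inner_smul_left, real_inner_smul_right,
      inner_ee, hij, hij.symm, if_false, if_true, if_pos rfl]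
    simp [h1, h2]; ring
  rw [cpair, hden]
  simp only [inner_add_right, real_inner_smul_right, inner_e_right]
  ring

lemma cpair_single {k} (i : Fin k) {ε : ℝ} (h1 : ε*ε = 1)
    (v : EuclideanSpace ℝ (Fin k)) :
    cpair v (ε • e i) = 2 * (ε * v i) := by
  have hden : ⟪(ε • e i : EuclideanSpace ℝ (Fin k)), ε • e i⟫ = 1 := by
    simp only [real_inner_smul_left, real_inner_smul_right, inner_ee, if_pos rfl]
    simp [h1]
  rw [cpair, hden]
  simp only [real_inner_smul_right, inner_e_right]
  ring

lemma cpair_twosingle {k} (i : Fin k) {ε : ℝ} (h1 : ε*ε = 1)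
    (v : EuclideanSpace ℝ (Fin k)) :
    cpair v ((2*ε) • e i) = ε * v i := by
  have hden : ⟪((2*ε) • e i : EuclideanSpace ℝ (Fin k)), (2*ε) • e i⟫ = 4 := by
    simp only [real_inner_smul_left, real_inner_smul_right, inner_ee, if_pos rfl]
    simp; nlinarith [h1]
  rw [cpair, hden]
  simp only [real_inner_smul_right, inner_e_right]
  field_simp; ring

lemma cpair_sub {k} {i j : Fin k} (hij : i ≠ j) (v : EuclideanSpace ℝ (Fin k)) :
    cpair v (e i - e j) = v i - v j := by
  have : (e i - e j : EuclideanSpace ℝ (Fin k)) = (1:ℝ) • e i + (-1:ℝ) • e j := by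
    simp [sub_eq_add_neg]
  rw [this, cpair_pp hij (by norm_num) (by norm_num)]
  ring

lemma sign_sq {ε : ℝ} (h : IsSign ε) : ε * ε = 1 := by rcases h with rfl | rfl <;> norm_num

lemma Fval_eq {V : Type*} [NormedAddCommGroup V] [InnerProductSpace ℝ V] {Φ : Set V} {βt : V} {c : ℝ}
    (hc : 0 < c) (hw : ∃ α ∈ Φ, cpair βt α = c)
    (hlb : ∀ α ∈ Φ, 0 < cpair βt α → c ≤ cpair βt α) : Fval Φ βt = c := by
  apply IsLeast.csInf_eq
  refine ⟨⟨hc, hw⟩, ?_⟩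
  rintro x ⟨hx, α, hα, rfl⟩
  exact hlb α hα hx


lemma inner_sub_sub {k} (a b c d : Fin k) :
    ⟪(e a - e b : EuclideanSpace ℝ (Fin k)), e c - e d⟫ =
      (if a = c then (1:ℝ) else 0) - (if a = d then 1 else 0) - (if b = c then 1 else 0)
        + (if b = d then 1 else 0) := by
  simp only [inner_sub_left, inner_sub_right, inner_ee]; ring

lemma cpair_A {k} {i j : Fin k} (h : i ≠ j) (a b : Fin k) :
    cpair (e a - e b) (e i - e j) =
      (if a = i then (1:ℝ) else 0) - (if a = j then 1 else 0) - (if b = i then 1 else 0)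
        + (if b = j then 1 else 0) := by
  rw [cpair, inner_sub_sub, inner_sub_sub]
  simp [h, h.symm]
  ring

lemma caseA1 : Fval (AmRoots 1) (e 0 - e (Fin.last 1)) = 2 := by
  apply Fval_eq two_pos
  · exact ⟨e 0 - e (Fin.last 1), ⟨0, Fin.last 1, by decide, rfl⟩, by rw [cpair_A (by decide)]; norm_num⟩
  · rintro α ⟨i, j, hij, rfl⟩ hx
    rw [cpair_A hij] at hx ⊢
    fin_cases i <;> fin_cases j <;> simp_all [Fin.last] <;> linarith

lemma caseAm (m : ℕ) (hm : 2 ≤ m) : Fval (AmRoots m) (e 0 - e (Fin.last m)) = 1 := by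
  have h0l : (0 : Fin (m+1)) ≠ Fin.last m := by
    simp [Fin.ext_iff, Fin.last]; omega
  have h01 : (0 : Fin (m+1)) ≠ ⟨1, by omega⟩ := by simp [Fin.ext_iff]
  have h1l : (⟨1, by omega⟩ : Fin (m+1)) ≠ Fin.last m := by simp [Fin.ext_iff, Fin.last]; omega
  apply Fval_eq one_pos
  · exact ⟨e 0 - e ⟨1, by omega⟩, ⟨0, ⟨1, by omega⟩, h01, rfl⟩,
      by rw [cpair_A h01]; simp [h0l, h01, h1l, h0l.symm, h1l.symm]⟩
  · rintro α ⟨i, j, hij, rfl⟩ hx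
    rw [cpair_A hij] at hx ⊢
    split_ifs at hx ⊢ <;> (norm_num at hx <;> norm_num)

lemma ee_coord {k} (a b x : Fin k) :
    (e a + e b : EuclideanSpace ℝ (Fin k)) x = (if a = x then (1:ℝ) else 0) + (if b = x then 1 else 0) := by
  have := e_apply a x; have := e_apply b x
  simp_all [PiLp.add_apply]

lemma caseBm (m : ℕ) (hm : 3 ≤ m) :
    Fval (BmRoots m) (e ⟨0, by linarith⟩ + e ⟨1, by linarith⟩) = 1 := by
  set i0 : Fin m := ⟨0, by linarith⟩
  set i1 : Fin m := ⟨1, by linarith⟩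
  set i2 : Fin m := ⟨2, by linarith⟩
  set βt : EuclideanSpace ℝ (Fin m) := e i0 + e i1 with hβ
  have hco : ∀ x, βt x = (if i0 = x then (1:ℝ) else 0) + (if i1 = x then 1 else 0) := fun x => ee_coord i0 i1 x
  apply Fval_eq one_pos
  · refine ⟨(1:ℝ) • e i0 + (1:ℝ) • e i2, Or.inl ⟨i0, i2, 1, 1, by simp [i0, i2, Fin.lt_def],
      Or.inl rfl, Or.inl rfl, rfl⟩, ?_⟩
    rw [cpair_pp (by simp [i0, i2, Fin.ext_iff]) (by norm_num) (by norm_num)]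
    rw [hco, hco]
    have h1 : i0 ≠ i2 := by simp [i0, i2, Fin.ext_iff]
    have h2 : i1 ≠ i2 := by simp [i1, i2, Fin.ext_iff]
    have h3 : i1 ≠ i0 := by simp [i1, i0, Fin.ext_iff]
    simp [h1, h2, h3]
  · rintro α (⟨i, j, ε, ε', hij, hε, hε', rfl⟩ | ⟨i, ε, hε, rfl⟩) hx
    · rw [cpair_pp hij.ne (sign_sq hε) (sign_sq hε'), hco, hco] at hx ⊢
      rcases hε with rfl | rfl <;> rcases hε' with rfl | rfl <;>
        split_ifs at hx ⊢ <;> (norm_num at hx <;> norm_num)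
    · rw [cpair_single i (sign_sq hε), hco] at hx ⊢
      rcases hε with rfl | rfl <;> split_ifs at hx ⊢ <;> (norm_num at hx <;> norm_num)

lemma caseCm (m : ℕ) (hm : 2 ≤ m) :
    Fval (CmRoots m) ((2 : ℝ) • e ⟨0, by linarith⟩) = 2 := by
  set i0 : Fin m := ⟨0, by linarith⟩
  set βt : EuclideanSpace ℝ (Fin m) := (2:ℝ) • e i0 with hβ
  have hco : ∀ x, βt x = 2 * (if i0 = x then (1:ℝ) else 0) := by
    intro x; rw [hβ, PiLp.smul_apply, e_apply, smul_eq_mul]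
  apply Fval_eq two_pos
  · refine ⟨(2*1 : ℝ) • e i0, Or.inr ⟨i0, 1, Or.inl rfl, rfl⟩, ?_⟩
    rw [cpair_twosingle i0 (by norm_num), hco]
    simp
  · rintro α (⟨i, j, ε, ε', hij, hε, hε', rfl⟩ | ⟨i, ε, hε, rfl⟩) hx
    · rw [cpair_pp hij.ne (sign_sq hε) (sign_sq hε'), hco, hco] at hx ⊢
      rcases hε with rfl | rfl <;> rcases hε' with rfl | rfl <;>
        split_ifs at hx ⊢ <;> (norm_num at hx <;> norm_num)
    · rw [cpair_twosingle i (sign_sq hε), hco] at hx ⊢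
      rcases hε with rfl | rfl <;> split_ifs at hx ⊢ <;> (norm_num at hx <;> norm_num)

lemma caseDm (m : ℕ) (hm : 4 ≤ m) :
    Fval (DmRoots m) (e ⟨0, by linarith⟩ + e ⟨1, by linarith⟩) = 1 := by
  set i0 : Fin m := ⟨0, by linarith⟩
  set i1 : Fin m := ⟨1, by linarith⟩
  set i2 : Fin m := ⟨2, by linarith⟩
  set βt : EuclideanSpace ℝ (Fin m) := e i0 + e i1 with hβ
  have hco : ∀ x, βt x = (if i0 = x then (1:ℝ) else 0) + (if i1 = x then 1 else 0) := fun x => ee_coord i0 i1 x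
  apply Fval_eq one_pos
  · refine ⟨(1:ℝ) • e i0 + (1:ℝ) • e i2, ⟨i0, i2, 1, 1, by simp [i0, i2, Fin.lt_def],
      Or.inl rfl, Or.inl rfl, rfl⟩, ?_⟩
    rw [cpair_pp (by simp [i0, i2, Fin.ext_iff]) (by norm_num) (by norm_num)]
    rw [hco, hco]
    have h1 : i0 ≠ i2 := by simp [i0, i2, Fin.ext_iff]
    have h2 : i1 ≠ i2 := by simp [i1, i2, Fin.ext_iff]
    have h3 : i1 ≠ i0 := by simp [i1, i0, Fin.ext_iff]
    simp [h1, h2, h3]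
  · rintro α ⟨i, j, ε, ε', hij, hε, hε', rfl⟩ hx
    rw [cpair_pp hij.ne (sign_sq hε) (sign_sq hε'), hco, hco] at hx ⊢
    rcases hε with rfl | rfl <;> rcases hε' with rfl | rfl <;>
      split_ifs at hx ⊢ <;> (norm_num at hx <;> norm_num)

set_option maxHeartbeats 2000000 in
lemma caseG2 : Fval G2Roots ((3 : ℝ) • e 2 - (e 0 + e 1 + e 2)) = 1 := by
  apply Fval_eq one_pos
  · refine ⟨(-1:ℝ) • ((3 : ℝ) • e 0 - (e 0 + e 1 + e 2)), Or.inr ⟨0, -1, Or.inr rfl, rfl⟩, ?_⟩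
    simp only [cpair, PiLp.inner_apply, Fin.sum_univ_three, PiLp.sub_apply, PiLp.add_apply,
      PiLp.smul_apply, e, EuclideanSpace.single_apply, RCLike.inner_apply]
    norm_num [Fin.ext_iff]
  · rintro α (⟨i, j, hij, rfl⟩ | ⟨i, ε, (rfl | rfl), rfl⟩) hx <;>
      [skip; fin_cases i; fin_cases i] <;>
      [fin_cases i <;> fin_cases j; skip; skip; skip; skip; skip; skip] <;>
      simp only [cpair, PiLp.inner_apply, Fin.sum_univ_three, PiLp.sub_apply, PiLp.add_apply,
        PiLp.smul_apply, e, EuclideanSpace.single_apply, RCLike.inner_apply] at hx ⊢ <;>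
      (norm_num [Fin.ext_iff] at hx <;> norm_num [Fin.ext_iff] <;> linarith)

lemma half_norm4 (α : EuclideanSpace ℝ (Fin 4)) (h : ∀ i, α i = 1/2 ∨ α i = -(1/2)) :
    ⟪α, α⟫ = 1 := by
  have h2 : ∀ i, α i * α i = 1/4 := fun i => by rcases h i with h|h <;> rw [h] <;> norm_num
  simp only [PiLp.inner_apply, RCLike.inner_apply, conj_trivial, Fin.sum_univ_four, h2]
  norm_num

lemma half_norm8 (α : EuclideanSpace ℝ (Fin 8)) (h : ∀ i, α i = 1/2 ∨ α i = -(1/2)) :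
    ⟪α, α⟫ = 2 := by
  have h2 : ∀ i, α i * α i = 1/4 := fun i => by rcases h i with h|h <;> rw [h] <;> norm_num
  simp only [PiLp.inner_apply, RCLike.inner_apply, conj_trivial, Fin.sum_univ_eight, h2]
  norm_num

lemma inner_ee_left {k} (a b : Fin k) (v : EuclideanSpace ℝ (Fin k)) :
    ⟪(e a + e b : EuclideanSpace ℝ (Fin k)), v⟫ = v a + v b := by
  rw [inner_add_left, inner_e_left, inner_e_left]

lemma inner_sub_e_left {k} (a b : Fin k) (v : EuclideanSpace ℝ (Fin k)) :
    ⟪(e a - e b : EuclideanSpace ℝ (Fin k)), v⟫ = v a - v b := by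
  rw [inner_sub_left, inner_e_left, inner_e_left]

lemma caseF4 : Fval F4Roots (e 0 + e 1) = 1 := by
  set βt : EuclideanSpace ℝ (Fin 4) := e 0 + e 1 with hβ
  have hco : ∀ x, βt x = (if 0 = x then (1:ℝ) else 0) + (if 1 = x then 1 else 0) :=
    fun x => ee_coord 0 1 x
  apply Fval_eq one_pos
  · refine ⟨(1:ℝ) • e 0 + (1:ℝ) • e 2, Or.inr (Or.inl ⟨0, 2, 1, 1, by decide,
      Or.inl rfl, Or.inl rfl, rfl⟩), ?_⟩
    rw [cpair_pp (by decide) (by norm_num) (by norm_num), hco, hco]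
    simp
  · rintro α (⟨i, ε, hε, rfl⟩ | ⟨i, j, ε, ε', hij, hε, hε', rfl⟩ | hhalf) hx
    · rw [cpair_single i (sign_sq hε), hco] at hx ⊢
      rcases hε with rfl | rfl <;> split_ifs at hx ⊢ <;> (norm_num at hx <;> norm_num)
    · rw [cpair_pp hij.ne (sign_sq hε) (sign_sq hε'), hco, hco] at hx ⊢
      rcases hε with rfl | rfl <;> rcases hε' with rfl | rfl <;>
        split_ifs at hx ⊢ <;> (norm_num at hx <;> norm_num)
    · rw [cpair, half_norm4 α hhalf, hβ, inner_ee_left] at hx ⊢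
      rcases hhalf 0 with h0 | h0 <;> rcases hhalf 1 with h1 | h1 <;>
        rw [h0, h1] at hx ⊢ <;> (norm_num at hx <;> norm_num)

lemma caseE8 : Fval E8Roots (e 6 + e 7) = 1 := by
  set βt : EuclideanSpace ℝ (Fin 8) := e 6 + e 7 with hβ
  have hco : ∀ x, βt x = (if 6 = x then (1:ℝ) else 0) + (if 7 = x then 1 else 0) :=
    fun x => ee_coord 6 7 x
  apply Fval_eq one_pos
  · refine ⟨(-1:ℝ) • e 5 + (1:ℝ) • e 6, Or.inl ⟨5, 6, -1, 1, by decide,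
      Or.inr rfl, Or.inl rfl, rfl⟩, ?_⟩
    rw [cpair_pp (by decide) (by norm_num) (by norm_num), hco, hco]
    simp
  · rintro α (⟨i, j, ε, ε', hij, hε, hε', rfl⟩ | ⟨hhalf, -⟩) hx
    · rw [cpair_pp hij.ne (sign_sq hε) (sign_sq hε'), hco, hco] at hx ⊢
      rcases hε with rfl | rfl <;> rcases hε' with rfl | rfl <;>
        split_ifs at hx ⊢ <;> (norm_num at hx <;> norm_num)
    · rw [cpair, half_norm8 α hhalf, hβ, inner_ee_left] at hx ⊢
      rcases hhalf 6 with h6 | h6 <;> rcases hhalf 7 with h7 | h7 <;>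
        rw [h6, h7] at hx ⊢ <;> (norm_num at hx <;> norm_num)

lemma caseE7 : Fval E7Roots (e 7 - e 6) = 1 := by
  set βt : EuclideanSpace ℝ (Fin 8) := e 7 - e 6 with hβ
  have hco : ∀ x, βt x = (if (7:Fin 8) = x then (1:ℝ) else 0) - (if (6:Fin 8) = x then 1 else 0) := by
    intro x
    rw [hβ, PiLp.sub_apply, e_apply, e_apply]
  set w : EuclideanSpace ℝ (Fin 8) :=
    (WithLp.equiv 2 (Fin 8 → ℝ)).symm (fun i => if i = 0 ∨ i = 6 then -(1/2) else 1/2) with hw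
  have hwco : ∀ x : Fin 8, w x = if x = 0 ∨ x = 6 then -(1/2) else (1/2 : ℝ) := by
    intro x; rw [hw, WithLp.equiv_symm_apply, PiLp.toLp_apply]
  have hwhalf : ∀ i, w i = 1/2 ∨ w i = -(1/2) := by
    intro i; rw [hwco]; split_ifs <;> simp
  apply Fval_eq one_pos
  · refine ⟨w, ⟨Or.inr ⟨hwhalf, ?_⟩, ?_⟩, ?_⟩
    · have : {i | w i = -(1/2)} = {(0 : Fin 8), 6} := by
        ext i
        simp only [Set.mem_setOf_eq, Set.mem_insert_iff, Set.mem_singleton_iff, hwco]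
        split_ifs with h <;> simp [h] <;> norm_num
      rw [this, Set.ncard_pair (by decide)]
      exact even_two
    · rw [inner_add_right, inner_e_right, inner_e_right, hwco, hwco]
      simp
    · rw [cpair, half_norm8 w hwhalf, hβ, inner_sub_e_left, hwco, hwco]
      simp
      norm_num
  · rintro α (⟨(⟨i, j, ε, ε', hij, hε, hε', rfl⟩ | ⟨hhalf, -⟩), -⟩) hx
    · rw [cpair_pp hij.ne (sign_sq hε) (sign_sq hε'), hco, hco] at hx ⊢
      rcases hε with rfl | rfl <;> rcases hε' with rfl | rfl <;>
        split_ifs at hx ⊢ <;> (norm_num at hx <;> norm_num)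
    · rw [cpair, half_norm8 α hhalf, hβ, inner_sub_e_left] at hx ⊢
      rcases hhalf 6 with h6 | h6 <;> rcases hhalf 7 with h7 | h7 <;>
        rw [h6, h7] at hx ⊢ <;> (norm_num at hx <;> norm_num)

lemma half_sum8 (α : EuclideanSpace ℝ (Fin 8)) (h : ∀ i, α i = 1/2 ∨ α i = -(1/2)) :
    α 0 + α 1 + α 2 + α 3 + α 4 + α 5 + α 6 + α 7
      = 4 - (Set.ncard {i | α i = -(1/2)} : ℝ) := by
  classical
  set F := Finset.univ.filter (fun i => α i = -(1/2)) with hF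
  have hcard : Set.ncard {i | α i = -(1/2)} = F.card := by
    rw [← Set.ncard_coe_finset]; congr 1; ext i; simp [hF]
  have h1 : ∑ i ∈ F, α i = -(1/2) * F.card := by
    rw [Finset.sum_congr rfl (fun i hi => (Finset.mem_filter.mp hi).2), Finset.sum_const,
      nsmul_eq_mul]
    ring
  have h2 : ∑ i ∈ Fᶜ, α i = (1/2) * Fᶜ.card := by
    have hmem : ∀ i ∈ Fᶜ, α i = 1/2 := fun i hi => (h i).resolve_right
      (fun h' => (Finset.mem_compl.mp hi) (Finset.mem_filter.mpr ⟨Finset.mem_univ i, h'⟩))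
    rw [Finset.sum_congr rfl hmem, Finset.sum_const, nsmul_eq_mul]
    ring
  have h3 : (F.card : ℝ) + Fᶜ.card = 8 := by
    have h3' : F.card + Fᶜ.card = 8 := by simpa using Finset.card_add_card_compl F
    exact_mod_cast h3'
  have h4 : ∑ i, α i = ∑ i ∈ F, α i + ∑ i ∈ Fᶜ, α i := (Finset.sum_add_sum_compl F _).symm
  have h5 : ∑ i, α i = α 0 + α 1 + α 2 + α 3 + α 4 + α 5 + α 6 + α 7 := by
    rw [Fin.sum_univ_eight]
  rw [← h5, h4, h1, h2, hcard]
  linarith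

lemma caseE6 :
    Fval E6Roots ((1 / 2 : ℝ) • (e 0 + e 1 + e 2 + e 3 + e 4 - e 5 + e 6 - e 7)) = 1 := by
  set βt : EuclideanSpace ℝ (Fin 8) :=
    (1 / 2 : ℝ) • (e 0 + e 1 + e 2 + e 3 + e 4 - e 5 + e 6 - e 7) with hβ
  have hβco : ∀ x : Fin 8, βt x = if x = 5 ∨ x = 7 then -(1/2) else (1/2:ℝ) := by
    intro x
    rw [hβ]
    fin_cases x <;>
      simp (config := { decide := true }) [PiLp.smul_apply, PiLp.add_apply, PiLp.sub_apply,
        e_apply, smul_eq_mul] <;> norm_num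
  have hβhalf : ∀ i, βt i = 1/2 ∨ βt i = -(1/2) := by
    intro i; rw [hβco]; split_ifs <;> simp
  apply Fval_eq one_pos
  · refine ⟨(1:ℝ) • e 0 + (1:ℝ) • e 1,
      ⟨Or.inl ⟨0, 1, 1, 1, by decide, Or.inl rfl, Or.inl rfl, rfl⟩, ?_, ?_⟩, ?_⟩
    · simp [inner_add_left, inner_add_right, real_inner_smul_left, inner_e_right, e_apply]
    · simp [inner_add_left, inner_add_right, real_inner_smul_left, inner_e_right, e_apply]
    · rw [cpair_pp (by decide) (by norm_num) (by norm_num), hβco, hβco]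
      simp (config := { decide := true })
      norm_num
  · rintro α ⟨(⟨i, j, ε, ε', hij, hε, hε', rfl⟩ | ⟨hhalf, hpar⟩), ho1, ho2⟩ hx
    · rw [cpair_pp hij.ne (sign_sq hε) (sign_sq hε')] at hx ⊢
      rcases hβhalf i with hi | hi <;> rcases hβhalf j with hj | hj <;>
        rw [hi, hj] at hx ⊢ <;>
        rcases hε with rfl | rfl <;> rcases hε' with rfl | rfl <;> (norm_num at hx <;> norm_num)
    · rw [inner_add_right, inner_e_right, inner_e_right] at ho1 ho2
      have hnum : ⟪βt, α⟫ =
          (α 0 + α 1 + α 2 + α 3 + α 4 - α 5 + α 6 - α 7) / 2 := by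
        simp only [PiLp.inner_apply, RCLike.inner_apply, conj_trivial, Fin.sum_univ_eight]
        rw [hβco 0, hβco 1, hβco 2, hβco 3, hβco 4, hβco 5, hβco 6, hβco 7]
        simp (config := { decide := true })
        ring
      have hsum := half_sum8 α hhalf
      obtain ⟨j, hj⟩ := hpar
      rw [hj] at hsum
      push_cast at hsum
      have hcp : cpair βt α = (α 0 + α 1 + α 2 + α 3 + α 4 - α 5 + α 6 - α 7) / 2 := by
        rw [cpair, half_norm8 α hhalf, hnum]; ring
      rw [hcp] at hx ⊢
      have hα5 : α 5 = α 7 := by linarith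
      rcases hhalf 7 with h7 | h7
      · have hjlt : (j:ℝ) < 1 := by linarith
        have hj0 : j = 0 := by exact_mod_cast Nat.lt_one_iff.mp (by exact_mod_cast hjlt)
        subst hj0
        push_cast at hsum
        linarith
      · have hjlt : (j:ℝ) < 3 := by linarith
        have hj2 : j ≤ 2 := by
          have : j < 3 := by exact_mod_cast hjlt
          omega
        have hj2' : (j:ℝ) ≤ 2 := by exact_mod_cast hj2
        linarith

/-- With `F(Φ) = min{⟨β̃, α⟩ > 0 : α ∈ Φ}` (`β̃` the highest root),
`F(Φ) = 2` for `Φ` of type `A₁` or `C_m` (`m ≥ 2`), and `F(Φ) = 1` for all other irreducible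
root systems. -/
theorem Fval_of_root_systems :
    Fval (AmRoots 1) (e 0 - e (Fin.last 1)) = 2 ∧
    (∀ (m : ℕ) (_ : 2 ≤ m), Fval (AmRoots m) (e 0 - e (Fin.last m)) = 1) ∧
    (∀ (m : ℕ) (hm : 3 ≤ m),
      Fval (BmRoots m) (e ⟨0, by omega⟩ + e ⟨1, by omega⟩) = 1) ∧
    (∀ (m : ℕ) (hm : 2 ≤ m), Fval (CmRoots m) ((2 : ℝ) • e ⟨0, by omega⟩) = 2) ∧
    (∀ (m : ℕ) (hm : 4 ≤ m),
      Fval (DmRoots m) (e ⟨0, by omega⟩ + e ⟨1, by omega⟩) = 1) ∧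
    Fval G2Roots ((3 : ℝ) • e 2 - (e 0 + e 1 + e 2)) = 1 ∧
    Fval F4Roots (e 0 + e 1) = 1 ∧
    Fval E6Roots ((1 / 2 : ℝ) • (e 0 + e 1 + e 2 + e 3 + e 4 - e 5 + e 6 - e 7)) = 1 ∧
    Fval E7Roots (e 7 - e 6) = 1 ∧
    Fval E8Roots (e 6 + e 7) = 1 := by
  exact ⟨caseA1, caseAm, caseBm, caseCm, caseDm, caseG2, caseF4, caseE6, caseE7, caseE8⟩

end
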